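/- Let Ω = ℂ \ [0,∞) be the complex plane slit along the nonnegative real axis, with the branch Log z = ln|z| + i·Arg z where 0 < Arg z < 2π. Let λ₁, …, λₙ ∈ ℂ be distinct, k₁, …, k_m ∈ ℕ be distinct, and let U ⊂ Ω be a nonempty open set. If F(z) = ∑_{i=1}^n ∑_{j=1}^m a_{i,j} z^{λᵢ} (Log z)^{k_j} (with z^{λ} := e^{λ Log z}) vanishes for all z ∈ U, then all coefficients a_{i,j} are zero. -/

import Mathlib

open Polynomial Complex Topology Filter

lemma Tc_inj {c : ℂ} (hc : c ≠ 0) {P : ℂ[X]} (h : derivative P + c • P = 0) : P = 0 := by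
  by_contra hP
  have h2 : (derivative P).coeff P.natDegree = 0 := by
    rw [coeff_derivative]
    have : P.coeff (P.natDegree + 1) = 0 := coeff_natDegree_succ_eq_zero
    simp [this]
  have hd : (derivative P + c • P).coeff P.natDegree = c * P.leadingCoeff := by
    rw [coeff_add, coeff_smul, h2, zero_add, smul_eq_mul, leadingCoeff]
  rw [h, coeff_zero] at hd
  rcases mul_eq_zero.mp hd.symm with h1 | h1
  · exact hc h1
  · exact hP (leadingCoeff_eq_zero.mp h1)


-- one differentiation step, function level
lemma deriv_step {ι : Type*} (s : Finset ι) (μ : ι → ℂ) (P : ι → ℂ[X]) (c : ℂ)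
    (h : ∀ w : ℂ, ∑ i ∈ s, (P i).eval w * Complex.exp (μ i * w) = 0) :
    ∀ w : ℂ, ∑ i ∈ s, (derivative (P i) + (μ i - c) • P i).eval w * Complex.exp (μ i * w) = 0 := by
  intro w
  have hder : HasDerivAt (fun w : ℂ => ∑ i ∈ s, (P i).eval w * Complex.exp (μ i * w))
      (∑ i ∈ s, ((derivative (P i)).eval w * Complex.exp (μ i * w)
        + (P i).eval w * (Complex.exp (μ i * w) * μ i))) w := by
    apply HasDerivAt.fun_sum
    intro i _
    have h1 : HasDerivAt (fun y : ℂ => Complex.exp (μ i * y)) (Complex.exp (μ i * w) * μ i) w := by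
      simpa using (((hasDerivAt_id w).const_mul (μ i)).cexp)
    exact ((P i).hasDerivAt w).mul h1
  have hzero : (fun w : ℂ => ∑ i ∈ s, (P i).eval w * Complex.exp (μ i * w)) = fun _ => 0 := by
    funext w; exact h w
  rw [hzero] at hder
  have hd0 : (∑ i ∈ s, ((derivative (P i)).eval w * Complex.exp (μ i * w)
      + (P i).eval w * (Complex.exp (μ i * w) * μ i))) = 0 :=
    hder.unique (hasDerivAt_const w 0)
  have := h w
  calc ∑ i ∈ s, (derivative (P i) + (μ i - c) • P i).eval w * Complex.exp (μ i * w)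
      = (∑ i ∈ s, ((derivative (P i)).eval w * Complex.exp (μ i * w)
        + (P i).eval w * (Complex.exp (μ i * w) * μ i)))
        - c * ∑ i ∈ s, (P i).eval w * Complex.exp (μ i * w) := by
        rw [Finset.mul_sum, ← Finset.sum_sub_distrib]
        apply Finset.sum_congr rfl
        intro i _
        simp only [eval_add, eval_smul, smul_eq_mul]
        ring
    _ = 0 := by rw [hd0, h w]; ring

lemma exp_poly_indep {ι : Type*} [DecidableEq ι] :
    ∀ (N : ℕ) (s : Finset ι), s.card = N → ∀ (μ : ι → ℂ), Set.InjOn μ s → ∀ (P : ι → ℂ[X]),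
    (∀ w : ℂ, ∑ i ∈ s, (P i).eval w * Complex.exp (μ i * w) = 0) → ∀ i ∈ s, P i = 0 := by
  intro N
  induction N with
  | zero => intro s hs μ _ P _ i hi
            rw [Finset.card_eq_zero.mp hs] at hi; exact absurd hi (Finset.notMem_empty i)
  | succ N ih =>
    intro s hs μ hμ P hvan
    have hpos : 0 < s.card := by omega
    obtain ⟨i₀, hi₀⟩ := Finset.card_pos.mp hpos
    set Q : ℕ → ι → ℂ[X] :=
      fun r i => ((fun p => derivative p + (μ i - μ i₀) • p)^[r]) (P i) with hQdef
    have hQsucc : ∀ r i, Q (r+1) i = derivative (Q r i) + (μ i - μ i₀) • Q r i := by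
      intro r i
      simp only [hQdef, Function.iterate_succ_apply']
    have hQvan : ∀ r, ∀ w : ℂ, ∑ i ∈ s, (Q r i).eval w * Complex.exp (μ i * w) = 0 := by
      intro r
      induction r with
      | zero => simpa [hQdef] using hvan
      | succ r ihr =>
        have := deriv_step s μ (fun i => Q r i) (μ i₀) ihr
        intro w
        have h2 := this w
        simpa only [← hQsucc] using h2
    have hQi₀ : ∀ r, Q r i₀ = (derivative^[r]) (P i₀) := by
      intro r
      induction r with
      | zero => simp [hQdef]
      | succ r ihr =>
        rw [hQsucc, ihr, Function.iterate_succ_apply']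
        simp
    set N₀ := (P i₀).natDegree + 1 with hN₀
    have hQN₀i₀ : Q N₀ i₀ = 0 := by
      rw [hQi₀]; exact iterate_derivative_eq_zero (by omega)
    -- erase equation
    have herase : ∀ w : ℂ, ∑ i ∈ s.erase i₀, (Q N₀ i).eval w * Complex.exp (μ i * w) = 0 := by
      intro w
      have := hQvan N₀ w
      rw [← Finset.add_sum_erase s _ hi₀, hQN₀i₀] at this
      simpa using this
    have hcard : (s.erase i₀).card = N := by
      rw [Finset.card_erase_of_mem hi₀, hs]; omega
    have hμ' : Set.InjOn μ (s.erase i₀) :=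
      hμ.mono (by intro x hx; exact Finset.mem_of_mem_erase hx)
    have hz : ∀ i ∈ s.erase i₀, Q N₀ i = 0 :=
      ih (s.erase i₀) hcard μ hμ' _ herase
    have hPz : ∀ i ∈ s.erase i₀, P i = 0 := by
      intro i hi
      have hc : μ i - μ i₀ ≠ 0 := by
        have hne : i ≠ i₀ := Finset.ne_of_mem_erase hi
        have := hμ (Finset.mem_of_mem_erase hi) hi₀
        exact sub_ne_zero_of_ne (fun h => hne (this h))
      have hdown : ∀ r, Q r i = 0 → P i = 0 := by
        intro r
        induction r with
        | zero => intro h; simpa [hQdef] using h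
        | succ r ihr =>
          intro h
          rw [hQsucc] at h
          exact ihr (Tc_inj hc h)
      exact hdown N₀ (hz i hi)
    have hPi₀ : P i₀ = 0 := by
      apply Polynomial.funext
      intro w
      have := hvan w
      rw [← Finset.add_sum_erase s _ hi₀, Finset.sum_eq_zero (fun i hi => by
        rw [hPz i hi]; simp)] at this
      have hexp := Complex.exp_ne_zero (μ i₀ * w)
      simp only [add_zero, mul_eq_zero] at this
      rcases this with h | h
      · simpa using h
      · exact absurd h hexp
    intro i hi
    rcases eq_or_ne i i₀ with rfl | hne
    · exact hPi₀
    · exact hPz i (Finset.mem_erase.mpr ⟨hne, hi⟩)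



/-- The complex plane slit along the nonnegative real axis. -/
def SlitPlane : Set ℂ := {z : ℂ | ¬ (z.im = 0 ∧ 0 ≤ z.re)}

/-- The branch of logarithm on the slit plane with argument in (0, 2π):
`Log z = ln |z| + i · Arg z`, `0 < Arg z < 2π`. -/
noncomputable def SlitLog (z : ℂ) : ℂ := Complex.log (-z) + Real.pi * Complex.I

/-- The power function `z ^ α := exp (α · Log z)` for this branch. -/
noncomputable def slitPow (z α : ℂ) : ℂ := Complex.exp (α * SlitLog z)

lemma exp_SlitLog {z : ℂ} (hz : z ≠ 0) : Complex.exp (SlitLog z) = z := by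
  rw [SlitLog, Complex.exp_add, Complex.exp_log (neg_ne_zero.mpr hz), Complex.exp_pi_mul_I]
  ring

theorem pow_log_independence_on_slit_plane
    (n m : ℕ) (lam : Fin n → ℂ) (hlam : Function.Injective lam)
    (k : Fin m → ℕ) (hk : Function.Injective k)
    (a : Fin n → Fin m → ℂ)
    (U : Set ℂ) (hUsub : U ⊆ SlitPlane) (hU : IsOpen U) (hne : U.Nonempty)
    (hvanish : ∀ z ∈ U,
      (∑ i, ∑ j, a i j * slitPow z (lam i) * (SlitLog z) ^ (k j)) = 0) :
    ∀ i j, a i j = 0 := by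
  obtain ⟨z₀, hz₀U⟩ := hne
  have hz₀SP : z₀ ∈ SlitPlane := hUsub hz₀U
  have hz₀ : z₀ ≠ 0 := by
    intro h; exact hz₀SP (by simp [h])
  set G : ℂ → ℂ := fun w => ∑ i, ∑ j, a i j * Complex.exp (lam i * w) * w ^ (k j) with hGdef
  have hG0 : ∀ z ∈ U, G (SlitLog z) = 0 := by
    intro z hz
    simpa [hGdef, slitPow] using hvanish z hz
  -- G is entire
  have hGdiff : Differentiable ℂ G := by
    apply Differentiable.fun_sum; intro i _
    apply Differentiable.fun_sum; intro j _
    exact ((differentiable_const _).mul ((differentiable_id.const_mul _).cexp)).mul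
      (differentiable_pow _)
  have hGan : AnalyticOnNhd ℂ G Set.univ := analyticOnNhd_univ_iff_differentiable.mpr hGdiff
  set w₀ := SlitLog z₀ with hw₀
  -- continuity of SlitLog at z₀
  have hmem : -z₀ ∈ Complex.slitPlane := by
    rw [Complex.mem_slitPlane_iff]
    simp only [Complex.neg_re, Complex.neg_im, neg_ne_zero]
    by_cases h : z₀.im = 0
    · left
      rcases lt_or_ge z₀.re 0 with h' | h'
      · linarith
      · exact absurd ⟨h, h'⟩ hz₀SP
    · right; exact h
  have hcont : ContinuousAt SlitLog z₀ := by
    have : ContinuousAt (fun z : ℂ => Complex.log (-z)) z₀ :=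
      (continuousAt_clog hmem).comp (continuous_neg.continuousAt)
    exact this.add continuousAt_const
  have hne0 : ∀ᶠ z in 𝓝[≠] z₀, z ≠ (0:ℂ) :=
    eventually_nhdsWithin_of_eventually_nhds
      ((isOpen_ne.eventually_mem hz₀))
  have htend : Filter.Tendsto SlitLog (𝓝[≠] z₀) (𝓝[≠] w₀) := by
    rw [tendsto_nhdsWithin_iff]
    constructor
    · exact hcont.tendsto.mono_left nhdsWithin_le_nhds
    · filter_upwards [hne0, self_mem_nhdsWithin] with z hz hz' heq
      apply hz'
      have : Complex.exp (SlitLog z) = Complex.exp w₀ := by rw [heq]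
      rwa [exp_SlitLog hz, hw₀, exp_SlitLog hz₀] at this
  have hUev : ∀ᶠ z in 𝓝[≠] z₀, z ∈ U :=
    eventually_nhdsWithin_of_eventually_nhds (hU.eventually_mem hz₀U)
  have hfreq : ∃ᶠ w in 𝓝[≠] w₀, G w = 0 :=
    htend.frequently ((hUev.mono fun z hz => hG0 z hz).frequently)
  have hGzero : ∀ w : ℂ, G w = 0 := by
    have := hGan.eqOn_zero_of_preconnected_of_frequently_eq_zero
      isPreconnected_univ (Set.mem_univ w₀) hfreq
    intro w; exact this (Set.mem_univ w)
  -- polynomial reformulation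
  classical
  set P : Fin n → Polynomial ℂ := fun i => ∑ j, Polynomial.C (a i j) * Polynomial.X ^ (k j)
    with hPdef
  have hvan : ∀ w : ℂ, ∑ i ∈ Finset.univ, (P i).eval w * Complex.exp (lam i * w) = 0 := by
    intro w
    have := hGzero w
    rw [hGdef] at this
    rw [← this]
    apply Finset.sum_congr rfl
    intro i _
    rw [hPdef]
    simp only [Polynomial.eval_finset_sum, Polynomial.eval_mul, Polynomial.eval_C,
      Polynomial.eval_pow, Polynomial.eval_X, Finset.sum_mul]
    apply Finset.sum_congr rfl
    intro j _
    ring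
  have hP0 : ∀ i, P i = 0 := by
    intro i
    exact exp_poly_indep Finset.univ.card Finset.univ rfl lam
      (hlam.injOn) P hvan i (Finset.mem_univ i)
  intro i j
  have := congrArg (fun p => Polynomial.coeff p (k j)) (hP0 i)
  simp only [hPdef, Polynomial.finset_sum_coeff, Polynomial.coeff_C_mul,
    Polynomial.coeff_X_pow, Polynomial.coeff_zero, mul_ite, mul_one, mul_zero] at this
  rwa [Finset.sum_eq_single j (fun j' _ hj' => by
      rw [if_neg (fun h => hj' (hk h.symm))]) (fun h => absurd (Finset.mem_univ j) h),
    if_pos rfl] at this
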